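/- Let H be a hereditary graph property closed under union with K₁, G a graph, and e = uv an edge. If γ_H(G) < γ_H(G − e), then γ_H(G) = γ_H(G − e) − 1. -/

import Mathlib

open SimpleGraph

/-- A graph property: a class of finite simple graphs on arbitrary vertex types. -/
abbrev GraphProp := ∀ (V : Type), SimpleGraph V → Prop

/-- Closure under graph isomorphism. -/
def IsoClosed (P : GraphProp) : Prop :=
  ∀ (V W : Type) (G : SimpleGraph V) (H : SimpleGraph W), Nonempty (G ≃g H) → P V G → P W H

/-- A property is nondegenerate if it contains all edgeless graphs. -/
def Nondegenerate (P : GraphProp) : Prop :=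
  IsoClosed P ∧ ∀ (V : Type), P V ⊥

/-- Closed under induced subgraphs. -/
def InducedHereditary (P : GraphProp) : Prop :=
  IsoClosed P ∧ ∀ (V : Type) (G : SimpleGraph V) (s : Set V), P V G → P s (G.induce s)

/-- Closed under all subgraphs. -/
def Hereditary (P : GraphProp) : Prop :=
  InducedHereditary P ∧ ∀ (V : Type) (G G' : SimpleGraph V), G' ≤ G → P V G → P V G'

/-- The graph `G` together with one new isolated vertex. -/
def addK1 {V : Type} (G : SimpleGraph V) : SimpleGraph (V ⊕ Unit) where
  Adj a b := ∃ x y, a = Sum.inl x ∧ b = Sum.inl y ∧ G.Adj x y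
  symm := by constructor; rintro a b ⟨x, y, rfl, rfl, h⟩; exact ⟨y, x, rfl, rfl, h.symm⟩
  loopless := by constructor; rintro a ⟨x, y, rfl, hy, h⟩; simp only [Sum.inl.injEq] at hy; subst hy; exact G.irrefl h

/-- Closure under disjoint union with `K₁`. -/
def ClosedUnderK1 (P : GraphProp) : Prop :=
  ∀ (V : Type) (G : SimpleGraph V), P V G → P (V ⊕ Unit) (addK1 G)

/-- `S` is a dominating set of `G`. -/
def IsDominating {V : Type} (G : SimpleGraph V) (S : Set V) : Prop :=
  ∀ v ∉ S, ∃ u ∈ S, G.Adj u v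

/-- `S` is a dominating set inducing a subgraph with property `P`. -/
def IsDomPSet (P : GraphProp) {V : Type} (G : SimpleGraph V) (S : Set V) : Prop :=
  IsDominating G S ∧ P S (G.induce S)

/-- The domination number with respect to the property `P`. -/
noncomputable def gammaP (P : GraphProp) {V : Type} [Fintype V] (G : SimpleGraph V) : ℕ :=
  sInf (Set.ncard '' {S : Set V | IsDomPSet P G S})

/-- A minimum dominating `P`-set. -/
def IsGammaSet (P : GraphProp) {V : Type} [Fintype V] (G : SimpleGraph V) (S : Set V) : Prop :=
  IsDomPSet P G S ∧ S.ncard = gammaP P G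

/-- The ordinary domination number. -/
noncomputable def gamma {V : Type} [Fintype V] (G : SimpleGraph V) : ℕ :=
  sInf (Set.ncard '' {S : Set V | IsDominating G S})

/-- The graph obtained from `G` by deleting the edge `uv` and replacing it by the
path `u - x₀ - x₁ - ⋯ - x_{t-1} - v` through `t` new vertices. -/
def subdiv {V : Type} (G : SimpleGraph V) (u v : V) (t : ℕ) : SimpleGraph (V ⊕ Fin t) where
  Adj a b := match a, b with
    | Sum.inl a, Sum.inl b => G.Adj a b ∧ ¬((a = u ∧ b = v) ∨ (a = v ∧ b = u))
    | Sum.inl a, Sum.inr i => (a = u ∧ (i : ℕ) = 0) ∨ (a = v ∧ (i : ℕ) + 1 = t)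
    | Sum.inr i, Sum.inl a => (a = u ∧ (i : ℕ) = 0) ∨ (a = v ∧ (i : ℕ) + 1 = t)
    | Sum.inr i, Sum.inr j => (i : ℕ) + 1 = (j : ℕ) ∨ (j : ℕ) + 1 = (i : ℕ)
  symm := by
    constructor
    rintro (a | i) (b | j) h
    · exact ⟨h.1.symm, fun hc => h.2 (by tauto)⟩
    · exact h
    · exact h
    · tauto
  loopless := by
    constructor
    rintro (a | i) h
    · exact G.irrefl h.1
    · omega

/-- The private neighbour set `pn_G[x, X] = {y : N[y,G] ∩ X = {x}}`. -/
def pn {V : Type} (G : SimpleGraph V) (X : Set V) (x : V) : Set V :=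
  {y | insert y (G.neighborSet y) ∩ X = {x}}

/-- The graph `G` with the vertex `v` deleted. -/
abbrev delVert {V : Type} (G : SimpleGraph V) (v : V) : SimpleGraph {w : V // w ≠ v} :=
  G.induce {w : V | w ≠ v}

/-- An independent set. -/
def IsIndep {V : Type} (G : SimpleGraph V) (S : Set V) : Prop :=
  S.Pairwise fun a b => ¬ G.Adj a b


/-! If `S` is a minimum dominating `H`-set of `G` that does not dominate `G − uv`, the undominated
vertex `w` is an endpoint of `uv` with no neighbour in `S` in `G − uv`. Then `S ∪ {w}` dominates
`G − uv` and induces `G[S] + K₁ ∈ H`, so `γ_H(G − uv) ≤ γ_H(G) + 1`. Dominating `H`-sets of `G`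
exist because `γ_H(G − uv) > 0` makes `H` nonempty, and then a maximal independent set induces an
edgeless graph, which lies in `H` by heredity and closure under `K₁`. -/

variable {P : GraphProp} {V : Type} {G : SimpleGraph V} {S : Set V}

def addK1IsoInduceInsert [DecidablePred (· ∈ S)] {w : V} (hw : w ∉ S)
    (hwS : ∀ s ∈ S, ¬ G.Adj s w) : addK1 (G.induce S) ≃g G.induce (insert w S) where
  toEquiv := (Equiv.Set.insert hw).symm
  map_rel_iff' := by
    rintro (x | ⟨⟩) (y | ⟨⟩)
    · simp [addK1]
    · simpa [addK1] using hwS x x.2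
    · simpa [addK1] using fun h => hwS y y.2 h.symm
    · simp [addK1]

lemma prop_induce_insert (hiso : IsoClosed P) (hK1 : ClosedUnderK1 P) {w : V} (hw : w ∉ S)
    (hwS : ∀ s ∈ S, ¬ G.Adj s w) (hS : P S (G.induce S)) :
    P (insert w S : Set V) (G.induce (insert w S)) := by
  classical
  exact hiso _ _ _ _ ⟨addK1IsoInduceInsert hw hwS⟩ (hK1 _ _ hS)

lemma prop_induce_empty (hP : InducedHereditary P) {W : Type} {H : SimpleGraph W} (hH : P W H)
    (G : SimpleGraph V) : P (∅ : Set V) (G.induce ∅) :=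
  hP.1 _ _ _ _ ⟨⟨Equiv.equivOfIsEmpty _ _, fun {a} => isEmptyElim a⟩⟩ (hP.2 W H ∅ hH)

lemma isIndepSet_insert {a : V} :
    G.IsIndepSet (insert a S) ↔ G.IsIndepSet S ∧ ∀ b ∈ S, a ≠ b → ¬ G.Adj a b := by
  simp +contextual [← isClique_compl, isClique_insert]

lemma prop_induce_of_isIndepSet (hP : InducedHereditary P) (hK1 : ClosedUnderK1 P)
    {W : Type} {H : SimpleGraph W} (hH : P W H) (hfin : S.Finite) (hS : G.IsIndepSet S) :
    P S (G.induce S) := by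
  induction S, hfin using Set.Finite.induction_on with
  | empty => exact prop_induce_empty hP hH G
  | @insert w S hw _ ih =>
    rw [isIndepSet_insert] at hS
    refine prop_induce_insert hP.1 hK1 hw (fun s hs h => ?_) (ih hS.1)
    exact hS.2 s hs (ne_of_mem_of_not_mem hs hw).symm h.symm

lemma isDominating_of_maximal_isIndepSet (hS : Maximal G.IsIndepSet S) : IsDominating G S := by
  intro x hx
  by_contra! hxS
  have hins : G.IsIndepSet (insert x S) :=
    isIndepSet_insert.2 ⟨hS.1, fun s hs _ h => hxS s hs h.symm⟩
  exact hx (hS.2 hins (Set.subset_insert x S) (Set.mem_insert x S))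

lemma exists_isDomPSet (hP : InducedHereditary P) (hK1 : ClosedUnderK1 P)
    {W : Type} {H : SimpleGraph W} (hH : P W H) [Finite V] (G : SimpleGraph V) :
    ∃ S, IsDomPSet P G S := by
  obtain ⟨S, hS⟩ := (Set.toFinite {S : Set V | G.IsIndepSet S}).exists_maximal
    ⟨∅, by simp⟩
  exact ⟨S, isDominating_of_maximal_isIndepSet hS,
    prop_induce_of_isIndepSet hP hK1 hH S.toFinite hS.1⟩

lemma IsDominating.insert_deleteEdges {u : V} (hS : IsDominating G S) (hu : u ∉ S) (v : V) :
    IsDominating (G.deleteEdges {s(u, v)}) (insert u S) := by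
  intro x hx
  rw [Set.mem_insert_iff, not_or] at hx
  obtain ⟨s, hs, hsx⟩ := hS x hx.2
  refine ⟨s, Set.mem_insert_of_mem u hs, deleteEdges_adj.2 ⟨hsx, ?_⟩⟩
  rw [Set.mem_singleton_iff, Sym2.eq_iff]
  rintro (⟨rfl, -⟩ | ⟨-, rfl⟩)
  · exact hu hs
  · exact hx.1 rfl

lemma IsDomPSet.of_le (hP : Hereditary P) {G' : SimpleGraph V} (hle : G' ≤ G)
    (hS : IsDomPSet P G S) (hdom : IsDominating G' S) : IsDomPSet P G' S :=
  ⟨hdom, hP.2 _ _ _ (comap_monotone _ hle) hS.2⟩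

lemma IsDomPSet.exists_deleteEdges_ncard_le (hP : Hereditary P) (hK1 : ClosedUnderK1 P)
    (hS : IsDomPSet P G S) (u v : V) :
    ∃ S', IsDomPSet P (G.deleteEdges {s(u, v)}) S' ∧ S'.ncard ≤ S.ncard + 1 := by
  set G' := G.deleteEdges {s(u, v)}
  by_cases hdom : IsDominating G' S
  · exact ⟨S, hS.of_le hP (deleteEdges_le _) hdom, Nat.le_succ _⟩
  obtain ⟨w, hwS, hw⟩ : ∃ w ∉ S, ∀ s ∈ S, ¬ G'.Adj s w := by
    simpa [IsDominating] using hdom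
  have hPS : P S (G'.induce S) := hP.2 _ _ _ (comap_monotone _ (deleteEdges_le _)) hS.2
  refine ⟨insert w S, ⟨?_, prop_induce_insert hP.1.1 hK1 hwS hw hPS⟩, Set.ncard_insert_le _ _⟩
  obtain ⟨s, hs, hsw⟩ := hS.1 w hwS
  have hedge : s(s, w) = s(u, v) := by
    by_contra hne
    exact hw s hs (deleteEdges_adj.2 ⟨hsw, hne⟩)
  rcases Sym2.eq_iff.1 hedge with ⟨-, rfl⟩ | ⟨-, rfl⟩
  · simpa only [G', Sym2.eq_swap] using hS.1.insert_deleteEdges hwS u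
  · exact hS.1.insert_deleteEdges hwS v

lemma gammaP_le [Fintype V] (hS : IsDomPSet P G S) : gammaP P G ≤ S.ncard :=
  Nat.sInf_le ⟨S, hS, rfl⟩

lemma exists_isGammaSet [Fintype V] (h : {S | IsDomPSet P G S}.Nonempty) :
    ∃ S, IsGammaSet P G S := by
  obtain ⟨S, hS, hcard⟩ := Nat.sInf_mem (h.image Set.ncard)
  exact ⟨S, hS, hcard⟩

lemma exists_isDomPSet_of_gammaP_ne_zero [Fintype V] (h : gammaP P G ≠ 0) :
    ∃ S, IsDomPSet P G S := by
  by_contra! hne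
  simp [gammaP, hne] at h

theorem gammaP_deleteEdge_lt_general (P : GraphProp) (h1 : Hereditary P) (h2 : ClosedUnderK1 P)
    {V : Type} [Fintype V] (G : SimpleGraph V) (u v : V)
    (hlt : gammaP P G < gammaP P (G.deleteEdges {s(u, v)})) :
    gammaP P G = gammaP P (G.deleteEdges {s(u, v)}) - 1 := by
  obtain ⟨T, hT⟩ := exists_isDomPSet_of_gammaP_ne_zero (Nat.ne_zero_of_lt hlt)
  obtain ⟨S, hS, hcard⟩ := exists_isGammaSet (exists_isDomPSet h1.1 h2 hT.2 G)
  obtain ⟨S', hS', hcard'⟩ := hS.exists_deleteEdges_ncard_le h1 h2 u v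
  have := gammaP_le hS'
  omega

/-- if `γ_H(G) < γ_H(G − e)` then `γ_H(G) = γ_H(G − e) − 1`. -/
theorem gammaP_deleteEdge_lt (P : GraphProp) (h1 : Hereditary P) (h2 : ClosedUnderK1 P)
    {V : Type} [Fintype V] (G : SimpleGraph V) (u v : V) (he : G.Adj u v)
    (hlt : gammaP P G < gammaP P (G.deleteEdges {s(u, v)})) :
    gammaP P G = gammaP P (G.deleteEdges {s(u, v)}) - 1 :=
  gammaP_deleteEdge_lt_general P h1 h2 G u v hlt
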